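/- Consider the deterministic bullet process on finitely many bullets (b_0, b_1, …, b_n) with no triple collisions. Let S_{[1,n]} be the survivor set of the process on (b_1,…,b_n). If S_{[1,n]} is non-empty with first surviving bullet b_{s_1}, then the survivor set S_n of the process on (b_0,…,b_n) equals either S_{[1,n]} \ {b_{s_1}} or S_{[1,n]} ∪ {b_{s_0}} for some index s_0 < s_1. If S_{[1,n]} is empty then |S_n| = 1. -/

import Mathlib

open MeasureTheory ProbabilityTheory Filter Set

noncomputable section

namespace BulletProcess

/-- Firing time of bullet `i`: `t_i = Δ_1 + ⋯ + Δ_i` (the delay `Δ_0` plays no role). -/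
def fireTime (Δ : ℕ → ℝ) (i : ℕ) : ℝ := ∑ j ∈ Finset.Icc 1 i, Δ j

/-- Virtual position of bullet `i` at time `t`. -/
def pos (v Δ : ℕ → ℝ) (i : ℕ) (t : ℝ) : ℝ := v i * (t - fireTime Δ i)

/-- No three bullets are ever simultaneously at the same position. -/
def NoTriple (v Δ : ℕ → ℝ) : Prop :=
  ∀ t : ℝ, ∀ i j k : ℕ, i ≠ j → j ≠ k → i ≠ k →
    fireTime Δ i ≤ t → fireTime Δ j ≤ t → fireTime Δ k ≤ t →
    ¬(pos v Δ i t = pos v Δ j t ∧ pos v Δ j t = pos v Δ k t)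

/-- A consistent annihilation structure for the bullet process on the bullets indexed by `I`:
`partner i = some j` means bullets `i` and `j` mutually annihilate (at time `deathTime i`),
`partner i = none` means bullet `i` survives forever.  The axioms say that matched pairs
really collide (the later bullet is faster and catches the earlier one at their common death
time), and that two bullets that are both fired and still alive never occupy the same
position. -/
structure Dynamics (v Δ : ℕ → ℝ) (I : Set ℕ) where
  partner : ℕ → Option ℕ
  deathTime : ℕ → ℝ
  partner_mem : ∀ i j, i ∈ I → partner i = some j → j ∈ I
  partner_symm : ∀ i j, i ∈ I → j ∈ I → (partner i = some j ↔ partner j = some i)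
  partner_ne : ∀ i, i ∈ I → partner i ≠ some i
  death_symm : ∀ i j, i ∈ I → partner i = some j → deathTime j = deathTime i
  collide : ∀ i j, i ∈ I → i < j → partner i = some j →
    v i < v j ∧ fireTime Δ j ≤ deathTime i ∧
      pos v Δ i (deathTime i) = pos v Δ j (deathTime i)
  no_crossing : ∀ i j, i ∈ I → j ∈ I → i ≠ j → ∀ t : ℝ,
    fireTime Δ i ≤ t → fireTime Δ j ≤ t →
    (partner i = none ∨ t < deathTime i) →
    (partner j = none ∨ t < deathTime j) →
    pos v Δ i t ≠ pos v Δ j t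

namespace Dynamics

variable {v Δ : ℕ → ℝ} {I : Set ℕ}

/-- Bullet `i` survives (is never annihilated). -/
def survives (d : Dynamics v Δ I) (i : ℕ) : Prop := d.partner i = none

/-- The set of surviving bullets. -/
def surv (d : Dynamics v Δ I) : Set ℕ := {i | i ∈ I ∧ d.survives i}

/-- `d.annihilates j i` : the later bullet `j` catches up to and annihilates `i`. -/
def annihilates (d : Dynamics v Δ I) (j i : ℕ) : Prop := i < j ∧ d.partner i = some j

end Dynamics

/-- The probabilistic bullet process on the probability space `(Ω, P)`: i.i.d. velocities with
law `μ` and i.i.d. delays with law `ν` (all independent, and all strictly positive), together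
with a choice of dynamics for every admissible deterministic configuration and every index set
of bullets. -/
structure Setup (Ω : Type) [MeasurableSpace Ω] (P : Measure Ω) (μ ν : Measure ℝ) where
  V : ℕ → Ω → ℝ
  D : ℕ → Ω → ℝ
  Vpos : ∀ i ω, 0 < V i ω
  Dpos : ∀ i ω, 0 < D i ω
  measV : ∀ i, Measurable (V i)
  measD : ∀ i, Measurable (D i)
  lawV : ∀ i, P.map (V i) = μ
  lawD : ∀ i, P.map (D i) = ν
  indep : iIndepFun (m := fun _ : ℕ ⊕ ℕ => (inferInstance : MeasurableSpace ℝ)) (Sum.elim V D) P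
  dyn : ∀ (v Δ : ℕ → ℝ), 0 ≤ v 0 → (∀ i, i ≠ 0 → 0 < v i) → (∀ i, 0 < Δ i) →
    ∀ (I : Set ℕ), Dynamics v Δ I

namespace Setup

variable {Ω : Type} [MeasurableSpace Ω] {P : Measure Ω} {μ ν : Measure ℝ}
variable (B : Setup Ω P μ ν)

/-- The realized sequence of velocities. -/
def vseq (ω : Ω) : ℕ → ℝ := fun i => B.V i ω

/-- The realized sequence of delays. -/
def dseq (ω : Ω) : ℕ → ℝ := fun i => B.D i ω

/-- Validity of the pair `(μ, ν)`: almost surely there are no triple collisions. -/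
def valid : Prop := ∀ᵐ ω ∂P, NoTriple (B.vseq ω) (B.dseq ω)

/-- The dynamics of the bullet process on the bullets indexed by `I`. -/
def dynOn (ω : Ω) (I : Set ℕ) : Dynamics (B.vseq ω) (B.dseq ω) I :=
  B.dyn _ _ (le_of_lt (B.Vpos 0 ω)) (fun i _ => B.Vpos i ω) (fun i => B.Dpos i ω) I

/-- `S`, the survivor set of the full process. -/
def survSet (ω : Ω) : Set ℕ := (B.dynOn ω Set.univ).surv

/-- `S_n`, the survivor set of the truncated process on bullets `b_0, …, b_n`. -/
def truncS (ω : Ω) (n : ℕ) : Set ℕ := (B.dynOn ω (Set.Iic n)).surv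

/-- `b_n` is a potential survivor: it survives in the process on `b_0, …, b_n`. -/
def potSurv (ω : Ω) (n : ℕ) : Prop := (B.dynOn ω (Set.Iic n)).survives n

/-- The dynamics when the velocity of `b_0` is fixed to `v` (junk value `max v 0` if `v < 0`). -/
def dyn0 (vel : ℝ) (ω : Ω) (I : Set ℕ) :
    Dynamics (Function.update (B.vseq ω) 0 (max vel 0)) (B.dseq ω) I :=
  B.dyn _ _ (by simp) (fun i hi => by
      rw [Function.update_of_ne hi]; exact B.Vpos i ω)
    (fun i => B.Dpos i ω) I

/-- The event that the first bullet, with velocity fixed to `v`, survives forever. -/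
def survEvent (vel : ℝ) : Set Ω := {ω | (B.dyn0 vel ω Set.univ).survives 0}

/-- `θ(v)`: the probability that the first bullet survives when its velocity is fixed to `v`. -/
def theta (vel : ℝ) : ℝ := (P (B.survEvent vel)).toReal

/-- The critical velocity `v_c = inf {v ≥ 0 : θ(v) > 0}` (equal to `⊤` if no speed is fast). -/
def vc : EReal :=
  sInf {x : EReal | ∃ vel : ℝ, 0 ≤ vel ∧ 0 < B.theta vel ∧ x = (vel : EReal)}

end Setup

end BulletProcess

namespace BulletProcess

variable {Ω : Type} [MeasurableSpace Ω] {P : MeasureTheory.Measure Ω}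
  [MeasureTheory.IsProbabilityMeasure P] {μ ν : MeasureTheory.Measure ℝ}
  [MeasureTheory.IsProbabilityMeasure μ] [MeasureTheory.IsProbabilityMeasure ν]

/-!
A finite bullet process is determined by its bullets: the first annihilation occurring in either
of two dynamics on the same bullets is an annihilation of both (at that moment one of the two
colliding bullets must die in the other dynamics, and by `NoTriple` only against the other one),
so peeling such pairs off shows that the dynamics agree. The same peeling shows that removing
bullets which are alive up to time `τ` changes no annihilation before `τ`.

Now remove the first bullet `a`. If `a` survives, the other bullets behave as without `a`, so `a`
is a new minimum of the survivor set. If `a` is annihilated by `j`, every bullet fired between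
them is annihilated, earlier and by a partner fired between them (otherwise it would be
squeezed into a triple collision); these annihilations also happen without `a`. So with `a` the
survivors are those of the bullets after `j`, and without `a` those of the bullets from `j` on:
by induction one of the two survivor sets is the other plus a new minimum.
-/

variable {v Δ : ℕ → ℝ}

theorem fireTime_strictMono (hΔ : ∀ i, 0 < Δ i) : StrictMono (fireTime Δ) :=
  strictMono_nat_of_lt_succ fun i => by
    rw [fireTime, fireTime, Finset.sum_Icc_succ_top (by omega)]
    linarith [hΔ (i + 1)]

@[simp]
theorem pos_fireTime (i : ℕ) : pos v Δ i (fireTime Δ i) = 0 := by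
  simp [pos]

theorem pos_pos (hv : ∀ i, 0 < v i) {i : ℕ} {t : ℝ} (ht : fireTime Δ i < t) :
    0 < pos v Δ i t :=
  mul_pos (hv i) (sub_pos.2 ht)

theorem continuous_pos (i : ℕ) : Continuous (pos v Δ i) := by
  unfold pos; fun_prop

theorem le_of_forall_lt_on_Ico {f g : ℝ → ℝ} (hf : Continuous f) (hg : Continuous g)
    {c T : ℝ} (hcT : c < T) (hlt : ∀ t ∈ Ico c T, f t < g t) : f T ≤ g T :=
  closure_lt_subset_le hf hg <| closure_mono hlt <| by
    rw [closure_Ico hcT.ne]; exact right_mem_Icc.2 hcT.le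

namespace Dynamics

section

variable {I I' : Set ℕ}

def AliveBefore (d : Dynamics v Δ I) (i : ℕ) (T : ℝ) : Prop :=
  d.partner i = none ∨ T ≤ d.deathTime i

def PartnerClosed (d : Dynamics v Δ I) (J : Set ℕ) : Prop :=
  ∀ k ∈ J, ∀ m, d.partner k = some m → m ∈ J

def restrict (d : Dynamics v Δ I) (J : Set ℕ) (hJI : J ⊆ I) (hJ : d.PartnerClosed J) :
    Dynamics v Δ J where
  partner := d.partner
  deathTime := d.deathTime
  partner_mem i j hi := hJ i hi j
  partner_symm i j hi hj := d.partner_symm i j (hJI hi) (hJI hj)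
  partner_ne i hi := d.partner_ne i (hJI hi)
  death_symm i j hi := d.death_symm i j (hJI hi)
  collide i j hi := d.collide i j (hJI hi)
  no_crossing i j hi hj := d.no_crossing i j (hJI hi) (hJI hj)

theorem AliveBefore.aliveAt {d : Dynamics v Δ I} {i : ℕ} {T t : ℝ} (h : d.AliveBefore i T)
    (ht : t < T) : d.partner i = none ∨ t < d.deathTime i :=
  h.imp_right ht.trans_le

variable (d : Dynamics v Δ I)

theorem surv_restrict (J : Set ℕ) (hJI : J ⊆ I) (hJ : d.PartnerClosed J) :
    (d.restrict J hJI hJ).surv = d.surv ∩ J := by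
  ext x
  simp only [surv, survives, restrict, mem_inter_iff, mem_ofPred_eq]
  exact ⟨fun h => ⟨⟨hJI h.1, h.2⟩, h.1⟩, fun h => ⟨h.2, h.1.2⟩⟩

theorem partner_of_partner {i j : ℕ} (hi : i ∈ I) (h : d.partner i = some j) :
    d.partner j = some i :=
  (d.partner_symm i j hi (d.partner_mem i j hi h)).1 h

theorem PartnerClosed.sdiff {d : Dynamics v Δ I} {K : Set ℕ} (hK : d.PartnerClosed K) :
    d.PartnerClosed (I \ K) := fun l hl m hlm =>
  ⟨d.partner_mem l m hl.1 hlm, fun hm => hl.2 (hK m hm l (d.partner_of_partner hl.1 hlm))⟩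

theorem partnerClosed_pair {x y : ℕ} (hx : x ∈ I) (hxy : d.partner x = some y) :
    d.PartnerClosed {x, y} := by
  rintro k (rfl | rfl) m hkm
  · rw [hxy] at hkm; cases hkm; simp
  · rw [d.partner_of_partner hx hxy] at hkm; cases hkm; simp

theorem exists_surv_eq_of_sdiff {K J : Set ℕ}
    (hK : ∀ k ∈ K, ∃ m ∈ K, d.partner k = some m) (hJ : I \ K = J) :
    ∃ e : Dynamics v Δ J, e.surv = d.surv := by
  subst hJ
  have hcl : d.PartnerClosed K := fun k hk m hkm => by
    obtain ⟨m', hm', hkm'⟩ := hK k hk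
    rw [hkm', Option.some_inj] at hkm
    exact hkm ▸ hm'
  refine ⟨d.restrict _ sdiff_subset hcl.sdiff, ?_⟩
  rw [surv_restrict]
  ext x
  refine ⟨fun h => h.1, fun h => ⟨h, h.1, fun hxK => ?_⟩⟩
  obtain ⟨m, -, hxm⟩ := hK x hxK
  exact absurd h.2 (by simp [survives, hxm])

theorem exists_first_death (hfin : I.Finite) (hdead : ∃ l ∈ I, d.partner l ≠ none) :
    ∃ x ∈ I, ∃ y, d.partner x = some y ∧
      ∀ l ∈ I, d.partner l ≠ none → d.deathTime x ≤ d.deathTime l := by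
  obtain ⟨x, ⟨hx, hxd⟩, hmin⟩ := Set.exists_min_image {l ∈ I | d.partner l ≠ none}
    d.deathTime (hfin.subset (sep_subset _ _)) hdead
  obtain ⟨y, hy⟩ := Option.ne_none_iff_exists'.1 hxd
  exact ⟨x, hx, y, hy, fun l hl hld => hmin l ⟨hl, hld⟩⟩

theorem collision (hv : ∀ i, 0 < v i) (hΔ : ∀ i, 0 < Δ i) {i j : ℕ} (hi : i ∈ I)
    (h : d.partner i = some j) :
    fireTime Δ i < d.deathTime i ∧ pos v Δ i (d.deathTime i) = pos v Δ j (d.deathTime i) := by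
  have hj := d.partner_mem i j hi h
  have hij : i ≠ j := by rintro rfl; exact d.partner_ne i hi h
  rcases lt_or_gt_of_ne hij with hij | hji
  · obtain ⟨-, hjT, hmeet⟩ := d.collide i j hi hij h
    exact ⟨(fireTime_strictMono hΔ hij).trans_le hjT, hmeet⟩
  · have hT := d.death_symm j i hj (d.partner_of_partner hi h)
    obtain ⟨-, hiT, hmeet⟩ := d.collide j i hj hji (d.partner_of_partner hi h)
    rw [← hT] at hiT hmeet
    refine ⟨lt_of_le_of_ne hiT fun hfire => ?_, hmeet.symm⟩
    -- at its own firing time bullet `i` is at the origin, while `j` is already ahead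
    have := pos_pos hv (Δ := Δ) (hfire ▸ fireTime_strictMono hΔ hji)
    rw [hmeet, ← hfire, pos_fireTime] at this
    exact this.false

theorem pos_lt_pos_of_lt (hv : ∀ i, 0 < v i) (hΔ : ∀ i, 0 < Δ i) {i k : ℕ} {t T : ℝ}
    (hi : i ∈ I) (hk : k ∈ I) (hik : i < k) (hiT : d.AliveBefore i T)
    (hkT : d.AliveBefore k T) (htk : fireTime Δ k ≤ t) (htT : t < T) :
    pos v Δ k t < pos v Δ i t := by
  have hfire := fireTime_strictMono hΔ hik
  have hne : ∀ s ∈ Icc (fireTime Δ k) t, pos v Δ i s - pos v Δ k s ≠ 0 := fun s hs =>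
    sub_ne_zero.2 <| d.no_crossing i k hi hk hik.ne s (hfire.le.trans hs.1) hs.1
      (hiT.aliveAt (hs.2.trans_lt htT)) (hkT.aliveAt (hs.2.trans_lt htT))
  have hstart : 0 < pos v Δ i (fireTime Δ k) - pos v Δ k (fireTime Δ k) := by
    rw [pos_fireTime, sub_zero]; exact pos_pos hv hfire
  by_contra! hle
  obtain ⟨s, hs, hs0⟩ := intermediate_value_Icc' htk
    ((continuous_pos i).sub (continuous_pos k)).continuousOn
    (show (0 : ℝ) ∈ Icc (pos v Δ i t - pos v Δ k t) _ from ⟨by linarith, hstart.le⟩)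
  exact hne s hs hs0

/-- The live bullet `b` would be squeezed between `a` and `c`, making their meeting a triple
collision. -/
theorem false_of_meet_of_aliveBefore (hv : ∀ i, 0 < v i) (hΔ : ∀ i, 0 < Δ i)
    (htriple : NoTriple v Δ) {a b c : ℕ} {T : ℝ} (ha : a ∈ I) (hb : b ∈ I) (hc : c ∈ I)
    (hab : a < b) (hbc : b < c) (hcT : fireTime Δ c < T) (haT : d.AliveBefore a T)
    (hbT : d.AliveBefore b T) (hcT' : d.AliveBefore c T)
    (hmeet : pos v Δ a T = pos v Δ c T) : False := by
  have hfab := fireTime_strictMono hΔ hab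
  have hfbc := fireTime_strictMono hΔ hbc
  have hba := le_of_forall_lt_on_Ico (continuous_pos b) (continuous_pos a) hcT fun t ht =>
    d.pos_lt_pos_of_lt hv hΔ ha hb hab haT hbT (hfbc.le.trans ht.1) ht.2
  have hcb := le_of_forall_lt_on_Ico (continuous_pos c) (continuous_pos b) hcT fun t ht =>
    d.pos_lt_pos_of_lt hv hΔ hb hc hbc hbT hcT' ht.1 ht.2
  exact htriple T a b c hab.ne hbc.ne (hab.trans hbc).ne (by linarith) (by linarith) hcT.le
    ⟨by linarith, by linarith⟩

theorem exists_partner_mem_Ioo (hv : ∀ i, 0 < v i) (hΔ : ∀ i, 0 < Δ i)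
    (htriple : NoTriple v Δ) {i j k : ℕ} (hi : i ∈ I) (hij : i < j)
    (hp : d.partner i = some j) (hk : k ∈ I) (hk' : k ∈ Ioo i j) :
    ∃ m ∈ Ioo i j, d.partner k = some m ∧ d.deathTime k < d.deathTime i := by
  have hj := d.partner_mem i j hi hp
  have hpj := d.partner_of_partner hi hp
  have hTj := d.death_symm i j hi hp
  have hjT : fireTime Δ j < d.deathTime i := hTj ▸ (d.collision hv hΔ hj hpj).1
  obtain ⟨m, hkm, hkT⟩ : ∃ m, d.partner k = some m ∧ d.deathTime k < d.deathTime i := by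
    by_contra! hlate
    have hkT : d.AliveBefore k (d.deathTime i) := by
      cases h : d.partner k with
      | none => exact Or.inl h
      | some m => exact Or.inr (hlate m h)
    exact d.false_of_meet_of_aliveBefore hv hΔ htriple hi hk hj hk'.1 hk'.2 hjT
      (Or.inr le_rfl) hkT (Or.inr hTj.ge) (d.collision hv hΔ hi hp).2
  have hm := d.partner_mem k m hk hkm
  have hTm := d.death_symm k m hk hkm
  obtain ⟨hkT', hmeet⟩ := d.collision hv hΔ hk hkm
  have hmT' : fireTime Δ m < d.deathTime k :=
    hTm ▸ (d.collision hv hΔ hm (d.partner_of_partner hk hkm)).1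
  refine ⟨m, ⟨?_, ?_⟩, hkm, hkT⟩
  · by_contra! hmi
    have hmi : m < i := hmi.lt_of_ne <| by
      rintro rfl
      have hjk := d.partner_of_partner hk hkm
      rw [hp, Option.some_inj] at hjk
      exact hk'.2.ne' hjk
    exact d.false_of_meet_of_aliveBefore hv hΔ htriple hm hi hk hmi hk'.1 hkT'
      (Or.inr hTm.ge) (Or.inr hkT.le) (Or.inr le_rfl) hmeet.symm
  · by_contra! hjm
    have hjm : j < m := hjm.lt_of_ne <| by
      rintro rfl
      have hik := d.partner_of_partner hk hkm
      rw [hpj, Option.some_inj] at hik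
      exact hk'.1.ne hik
    exact d.false_of_meet_of_aliveBefore hv hΔ htriple hk hj hm hk'.2 hjm hmT'
      (Or.inr le_rfl) (Or.inr (hTj ▸ hkT.le)) (Or.inr hTm.ge) hmeet

theorem partner_eq_of_first_death {d' : Dynamics v Δ I'} (hv : ∀ i, 0 < v i)
    (hΔ : ∀ i, 0 < Δ i) (htriple : NoTriple v Δ) {i k : ℕ} (hi : i ∈ I) (hi' : i ∈ I')
    (hk' : k ∈ I') (hp : d.partner i = some k)
    (hfirst : ∀ l ∈ I', d'.partner l ≠ none → d.deathTime i ≤ d'.deathTime l) :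
    d'.partner i = some k := by
  set T := d.deathTime i
  have hk := d.partner_mem i k hi hp
  have hik : i ≠ k := by rintro rfl; exact d.partner_ne i hi hp
  obtain ⟨hiT, hmeet⟩ := d.collision hv hΔ hi hp
  have hkT : fireTime Δ k < T := by
    have := (d.collision hv hΔ hk (d.partner_of_partner hi hp)).1
    rwa [d.death_symm i k hi hp] at this
  obtain ⟨w, hw, m, hwm, hwT⟩ :
      ∃ w ∈ ({i, k} : Set ℕ), ∃ m, d'.partner w = some m ∧ d'.deathTime w = T := by
    by_contra! hcon
    have halive : ∀ w ∈ ({i, k} : Set ℕ), d'.partner w = none ∨ T < d'.deathTime w := by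
      intro w hw
      cases h : d'.partner w with
      | none => exact Or.inl rfl
      | some m =>
        have hw' : w ∈ I' := by rcases hw with rfl | rfl <;> assumption
        exact Or.inr <| (hfirst w hw' (by simp [h])).lt_of_ne (hcon w hw m h).symm
    exact d'.no_crossing i k hi' hk' hik T hiT.le hkT.le (halive i (by simp))
      (halive k (by simp)) hmeet
  have hw' : w ∈ I' := by rcases hw with rfl | rfl <;> assumption
  have hm' := d'.partner_mem w m hw' hwm
  have hmw : m ≠ w := by rintro rfl; exact d'.partner_ne m hw' hwm
  have hmT : fireTime Δ m < T := by
    have := (d'.collision hv hΔ hm' (d'.partner_of_partner hw' hwm)).1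
    rwa [d'.death_symm w m hw' hwm, hwT] at this
  have hmeet' : pos v Δ w T = pos v Δ m T := hwT ▸ (d'.collision hv hΔ hw' hwm).2
  have hm : m = i ∨ m = k := by
    by_contra! hm
    have hwi : pos v Δ w T = pos v Δ i T := by
      rcases hw with rfl | rfl; exacts [rfl, hmeet.symm]
    exact htriple T i k m hik (Ne.symm hm.2) (Ne.symm hm.1) hiT.le hkT.le hmT.le
      ⟨hmeet, by rw [← hmeet, ← hwi, hmeet']⟩
  rcases hw with rfl | rfl <;> rcases hm with rfl | rfl
  · exact absurd rfl hmw
  · exact hwm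
  · exact d'.partner_of_partner hw' hwm
  · exact absurd rfl hmw

theorem exists_common_pair (d' : Dynamics v Δ I') (hv : ∀ i, 0 < v i) (hΔ : ∀ i, 0 < Δ i)
    (htriple : NoTriple v Δ) (hfin : I.Finite) (hI' : I' ⊆ I) {τ : ℝ}
    (hτ : ∀ l ∈ I \ I', d.AliveBefore l τ) {p q : ℕ} (hp : p ∈ I)
    (hpq : d.partner p = some q) (hpτ : d.deathTime p < τ) :
    ∃ x ∈ I', ∃ y ∈ I', d.partner x = some y ∧ d'.partner x = some y := by
  obtain ⟨x, hx, y, hxy, hxmin⟩ := d.exists_first_death hfin ⟨p, hp, by simp [hpq]⟩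
  by_cases hfirst : ∀ l ∈ I', d'.partner l ≠ none → d.deathTime x ≤ d'.deathTime l
  · have hxτ := (hxmin p hp (by simp [hpq])).trans_lt hpτ
    have hmem : ∀ z ∈ I, d.partner z ≠ none → d.deathTime z < τ → z ∈ I' :=
      fun z hz hzd hzτ => by_contra fun hz' => (hτ z ⟨hz, hz'⟩).elim hzd hzτ.not_ge
    have hy := d.partner_mem x y hx hxy
    have hx' := hmem x hx (by simp [hxy]) hxτ
    have hy' := hmem y hy (by simp [d.partner_of_partner hx hxy])
      (by rwa [d.death_symm x y hx hxy])
    exact ⟨x, hx', y, hy', hxy,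
      d.partner_eq_of_first_death hv hΔ htriple hx hx' hy' hxy hfirst⟩
  · push Not at hfirst
    obtain ⟨l, hl, hld, hlx⟩ := hfirst
    obtain ⟨x', hx', y', hxy', hx'min⟩ :=
      d'.exists_first_death (hfin.subset hI') ⟨l, hl, hld⟩
    have hy' := d'.partner_mem x' y' hx' hxy'
    refine ⟨x', hx', y', hy', ?_, hxy'⟩
    exact d'.partner_eq_of_first_death hv hΔ htriple hx' (hI' hx') (hI' hy') hxy'
      fun m hm hmd => ((hx'min l hl hld).trans hlx.le).trans (hxmin m hm hmd)

end

theorem partner_eq_some_of_subset {I I' : Set ℕ} (d : Dynamics v Δ I)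
    (d' : Dynamics v Δ I') (hv : ∀ i, 0 < v i) (hΔ : ∀ i, 0 < Δ i) (htriple : NoTriple v Δ)
    (hfin : I.Finite) (hI' : I' ⊆ I) {τ : ℝ} (hτ : ∀ l ∈ I \ I', d.AliveBefore l τ)
    {p q : ℕ} (hp : p ∈ I) (hpq : d.partner p = some q) (hpτ : d.deathTime p < τ) :
    d'.partner p = some q := by
  obtain ⟨x, hx, y, hy, hdxy, hd'xy⟩ :=
    d.exists_common_pair d' hv hΔ htriple hfin hI' hτ hp hpq hpτ
  by_cases hpxy : p = x ∨ p = y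
  · rcases hpxy with rfl | rfl
    · rwa [Option.some_inj.1 (hpq.symm.trans hdxy)]
    · rw [d.partner_of_partner (hI' hx) hdxy, Option.some_inj] at hpq
      exact hpq ▸ d'.partner_of_partner hx hd'xy
  · have hp' : p ∈ I \ {x, y} := ⟨hp, by simpa using hpxy⟩
    exact partner_eq_some_of_subset
      (d.restrict _ sdiff_subset (d.partnerClosed_pair (hI' hx) hdxy).sdiff)
      (d'.restrict _ sdiff_subset (d'.partnerClosed_pair hx hd'xy).sdiff) hv hΔ htriple
      (hfin.subset sdiff_subset) (sdiff_subset_sdiff_left hI')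
      (fun l hl => hτ l ⟨hl.1.1, fun h => hl.2 ⟨h, hl.1.2⟩⟩) hp' hpq hpτ
termination_by I.ncard
decreasing_by exact ncard_lt_ncard (sdiff_ssubset_left_iff.2 ⟨x, hI' hx, by simp⟩) hfin

theorem surv_eq {I : Set ℕ} (d d' : Dynamics v Δ I) (hv : ∀ i, 0 < v i) (hΔ : ∀ i, 0 < Δ i)
    (htriple : NoTriple v Δ) (hfin : I.Finite) : d.surv = d'.surv := by
  have hsurvives : ∀ e e' : Dynamics v Δ I, ∀ p ∈ I, e'.survives p → e.survives p := by
    intro e e' p hp hp'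
    by_contra hne
    obtain ⟨q, hq⟩ := Option.ne_none_iff_exists'.1 hne
    have := e.partner_eq_some_of_subset e' hv hΔ htriple hfin subset_rfl
      (τ := e.deathTime p + 1) (fun l hl => (hl.2 hl.1).elim) hp hq (lt_add_one _)
    exact absurd (hp'.symm.trans this) (by simp)
  ext p
  exact ⟨fun h => ⟨h.1, hsurvives d' d p h.1 h.2⟩,
    fun h => ⟨h.1, hsurvives d d' p h.1 h.2⟩⟩

end Dynamics

def AddsMin (S T : Set ℕ) : Prop :=
  ∃ s, (∀ x ∈ S, s < x) ∧ T = insert s S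

theorem addsMin_surv_or {I I' : Set ℕ} (hv : ∀ i, 0 < v i) (hΔ : ∀ i, 0 < Δ i)
    (htriple : NoTriple v Δ) (hfin : I.Finite) {a : ℕ} (ha : a ∈ I)
    (hmin : ∀ x ∈ I, a ≤ x) (d : Dynamics v Δ I) (d' : Dynamics v Δ I')
    (hI' : I \ {a} = I') :
    AddsMin d'.surv d.surv ∨ AddsMin d.surv d'.surv := by
  subst hI'
  cases hpa : d.partner a with
  | none =>
    have hcl : d.PartnerClosed {a} := by
      rintro k rfl m hkm
      rw [hpa] at hkm
      cases hkm
    have hsurv : d'.surv = d.surv \ {a} := by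
      rw [← (d.restrict _ sdiff_subset hcl.sdiff).surv_eq d' hv hΔ htriple
        (hfin.subset sdiff_subset), Dynamics.surv_restrict, ← inter_sdiff_assoc,
        inter_eq_left.2 fun x hx => hx.1]
    refine Or.inl ⟨a, fun x hx => (hmin x hx.1.1).lt_of_ne' hx.1.2, ?_⟩
    rw [hsurv, insert_sdiff_singleton, insert_eq_of_mem (show a ∈ d.surv from ⟨ha, hpa⟩)]
  | some j =>
    have hj := d.partner_mem a j ha hpa
    have haj : a < j := (hmin j hj).lt_of_ne (by rintro rfl; exact d.partner_ne a ha hpa)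
    have hbetween := fun k (hk : k ∈ I) (hk' : k ∈ Ioo a j) =>
      d.exists_partner_mem_Ioo hv hΔ htriple ha haj hpa hk hk'
    have hK : ∀ k ∈ I ∩ Iic j, ∃ m ∈ I ∩ Iic j, d.partner k = some m := by
      rintro k ⟨hk, hkj⟩
      rcases (hmin k hk).eq_or_lt with rfl | hak
      · exact ⟨j, ⟨hj, mem_Iic.2 le_rfl⟩, hpa⟩
      rcases (mem_Iic.1 hkj).eq_or_lt with rfl | hkj
      · exact ⟨a, ⟨ha, mem_Iic.2 haj.le⟩, d.partner_of_partner ha hpa⟩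
      obtain ⟨m, hm, hkm, -⟩ := hbetween k hk ⟨hak, hkj⟩
      exact ⟨m, ⟨d.partner_mem k m hk hkm, mem_Iic.2 hm.2.le⟩, hkm⟩
    have hK' : ∀ k ∈ I ∩ Ioo a j, ∃ m ∈ I ∩ Ioo a j, d'.partner k = some m := by
      rintro k ⟨hk, hk'⟩
      obtain ⟨m, hm, hkm, hkT⟩ := hbetween k hk hk'
      refine ⟨m, ⟨d.partner_mem k m hk hkm, hm⟩, ?_⟩
      refine d.partner_eq_some_of_subset d' hv hΔ htriple hfin sdiff_subset
        (fun l hl => ?_) hk hkm hkT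
      obtain rfl : l = a := by simpa [hl.1] using hl.2
      exact Or.inr le_rfl
    obtain ⟨e, he⟩ := d.exists_surv_eq_of_sdiff hK (J := I ∩ Ioi j) (by
      ext x
      simp only [Set.mem_sdiff, mem_inter_iff, mem_Iic, mem_Ioi]
      grind)
    obtain ⟨f, hf⟩ := d'.exists_surv_eq_of_sdiff hK' (J := I ∩ Ici j) (by
      ext x
      simp only [Set.mem_sdiff, mem_inter_iff, mem_singleton_iff, mem_Ioo, mem_Ici]
      grind)
    have hJ : (I ∩ Ici j) \ {j} = I ∩ Ioi j := by
      ext x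
      simp only [Set.mem_sdiff, mem_inter_iff, mem_Ici, mem_Ioi, mem_singleton_iff]
      grind
    have hrec := addsMin_surv_or hv hΔ htriple (hfin.subset inter_subset_left)
      ⟨hj, self_mem_Ici⟩ (fun x hx => mem_Ici.1 hx.2) f e hJ
    rw [he, hf] at hrec
    exact hrec.symm
termination_by I.ncard
decreasing_by
  exact ncard_lt_ncard
    ((ssubset_iff_of_subset inter_subset_left).2 ⟨a, ha, fun h => haj.not_ge h.2⟩) hfin

/-- Deterministic finite bullet process, no triple collisions.  If the survivor set
`S_{[1,n]}` of `(b_1, …, b_n)` is empty then `|S_n| = 1`; otherwise, with `s₁` the first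
survivor of `S_{[1,n]}`, the survivor set `S_n` of `(b_0, …, b_n)` is either
`S_{[1,n]} \ {b_{s₁}}` or `S_{[1,n]} ∪ {b_{s₀}}` for some `s₀ < s₁`. -/
theorem add_bullet_front (v Δ : ℕ → ℝ) (hv : ∀ i, 0 < v i) (hΔ : ∀ i, 0 < Δ i)
    (htriple : NoTriple v Δ) (n : ℕ)
    (d1 : Dynamics v Δ (Set.Icc 1 n)) (d0 : Dynamics v Δ (Set.Iic n)) :
    (d1.surv = ∅ → d0.surv.encard = 1) ∧
      (∀ s₁ ∈ d1.surv, (∀ s ∈ d1.surv, s₁ ≤ s) →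
        d0.surv = d1.surv \ {s₁} ∨ ∃ s₀ < s₁, d0.surv = insert s₀ d1.surv) := by
  have hfront := addsMin_surv_or hv hΔ htriple (finite_Iic n) (Nat.zero_le n)
    (fun x _ => Nat.zero_le x) d0 d1
    (by ext x; simp only [Set.mem_sdiff, mem_Iic, mem_singleton_iff, mem_Icc]; omega)
  refine ⟨fun hempty => ?_, fun s₁ hs₁ hmin => ?_⟩
  · rcases hfront with ⟨s, -, hs⟩ | ⟨s, -, hs⟩
    · rw [hs, hempty, insert_empty_eq, encard_singleton]
    · exact absurd (hs ▸ mem_insert s _ : s ∈ d1.surv) (hempty ▸ notMem_empty s)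
  · rcases hfront with ⟨s, hs, hd0⟩ | ⟨s, hs, hd1⟩
    · exact Or.inr ⟨s, hs s₁ hs₁, hd0⟩
    · have hs₁s : s₁ = s := by
        rw [hd1] at hs₁ hmin
        exact hs₁.elim id fun h => absurd (hmin s (mem_insert s _)) (hs s₁ h).not_ge
      rw [hd1, hs₁s, insert_sdiff_self_of_notMem fun h => (hs s h).false]
      exact Or.inl rfl

end BulletProcess
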